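/- arXiv:2004.10070 — 2 statements merged into one kernel-verified Lean document; each statement's English description precedes it below -/
import Mathlib

section
/- Let V be a 6-dimensional complex vector space and ω ∈ O₅, with kernel line α_ω of ∧ω and associated hyperplane A_ω. Then: (i) α_ω ⊆ A_ω; (ii) A_ω is the smallest linear subspace W of V such that ω lies in the image of ⋀³W in ⋀³V; and (iii) there exists a non-decomposable σ ∈ ⋀²A_ω such that ω = α∧σ, where α spans α_ω. -/
open ExteriorAlgebra

/-- Membership in the Segre orbit `O₅`: a degree-3 element that is not decomposable and is
annihilated by wedging with some nonzero vector. -/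
def InO5 {V : Type*} [AddCommGroup V] [Module ℂ V] (ω : ExteriorAlgebra ℂ V) : Prop :=
  ω ∈ ⋀[ℂ]^3 V ∧ (¬ ∃ a b c : V, ω = ι ℂ a * ι ℂ b * ι ℂ c) ∧
    ∃ v : V, v ≠ 0 ∧ ι ℂ v * ω = 0

/-- The image of `⋀³W` in `⋀³V` for a subspace `W ⊆ V`: the span of triple wedges of
elements of `W`. -/
def wedgeCube {V : Type*} [AddCommGroup V] [Module ℂ V] (W : Submodule ℂ V) :
    Submodule ℂ (ExteriorAlgebra ℂ V) :=
  Submodule.span ℂ {x | ∃ u v w : V, u ∈ W ∧ v ∈ W ∧ w ∈ W ∧ x = ι ℂ u * ι ℂ v * ι ℂ w}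

/-- The image of `⋀²W` in `⋀²V` for a subspace `W ⊆ V`. -/
def wedgeSquare {V : Type*} [AddCommGroup V] [Module ℂ V] (W : Submodule ℂ V) :
    Submodule ℂ (ExteriorAlgebra ℂ V) :=
  Submodule.span ℂ {x | ∃ u v : V, u ∈ W ∧ v ∈ W ∧ x = ι ℂ u * ι ℂ v}

/-!
Contraction with a functional obeys `g ⌋ (u ∧ x) = g u • x - u ∧ (g ⌋ x)`. So `α ∧ ω = 0` forces
`f α • ω = 0`, and `ω = α ∧ (g ⌋ ω)` whenever `g α = 1`. Moreover the projection
`v ↦ v - g v • e` (with `g e = 1`) acts on the exterior algebra as `x ↦ x - e ∧ (g ⌋ x)`, so a form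
over `U` that is killed by `g ⌋` is a form over `U ∩ ker g`; with `g = f` this puts `ω` in
`⋀³ A_ω`. If `ω ∈ ⋀³ W` but `A_ω ⊄ W`, a functional `h` vanishing on `W` but not on `A_ω` kills
`ω`, so `ω` lives over the 4-dimensional `A_ω ∩ ker h`, which contains `α`. Then `ω = α ∧ σ` with
`σ` a 2-form over a 3-dimensional space, hence decomposable, and so `ω` would be decomposable.
-/

section LinearAlgebra

variable {K V : Type*} [Field K] [AddCommGroup V] [Module K V]

lemma Submodule.exists_le_span_triple [FiniteDimensional K V] {C : Submodule K V}
    (hC : Module.finrank K C ≤ 3) :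
    ∃ a b c : V, C ≤ Submodule.span K {a, b, c} := by
  obtain ⟨f, -, hspan, -⟩ := Submodule.exists_fun_fin_finrank_span_eq K (C : Set V)
  have hn : Module.finrank K (Submodule.span K (C : Set V)) ≤ 3 := by rwa [Submodule.span_eq]
  revert f hn
  generalize Module.finrank K (Submodule.span K (C : Set V)) = n
  intro f hspan hn
  let f' : ℕ → V := fun i => if h : i < n then f ⟨i, h⟩ else 0
  refine ⟨f' 0, f' 1, f' 2, (hspan.trans C.span_eq).ge.trans (Submodule.span_mono ?_)⟩
  rintro _ ⟨j, rfl⟩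
  have hj : f j = f' j := by simp [f']
  have hj3 : (j : ℕ) < 3 := j.2.trans_le hn
  rw [hj]
  interval_cases (j : ℕ) <;> simp

lemma Submodule.exists_dual_eq_one_and_le_ker {W : Submodule K V} {v : V} (hv : v ∉ W) :
    ∃ h : Module.Dual K V, h v = 1 ∧ W ≤ LinearMap.ker h := by
  obtain ⟨h, hhv, hW⟩ := W.exists_dual_map_eq_bot_of_notMem hv inferInstance
  refine ⟨(h v)⁻¹ • h, by simp [hhv], fun u hu => ?_⟩
  simp [LinearMap.mem_ker.1 (LinearMap.le_ker_iff_map.2 hW hu)]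

lemma Submodule.finrank_inf_ker_lt {U : Submodule K V} [FiniteDimensional K U]
    {g : Module.Dual K V} {e : V} (he : e ∈ U) (hge : g e ≠ 0) :
    Module.finrank K (U ⊓ LinearMap.ker g : Submodule K V) < Module.finrank K U :=
  Submodule.finrank_lt_finrank_of_lt (lt_of_le_of_ne inf_le_left fun h => hge (h ▸ he).2)

end LinearAlgebra

namespace ExteriorAlgebra

variable {R M : Type*} [CommRing R] [AddCommGroup M] [Module R M]

local infixl:70 " ⌋ " => CliffordAlgebra.contractLeft (Q := (0 : QuadraticForm R M))

lemma ι_mul_ι_comm (u v : M) : ι R u * ι R v = -(ι R v * ι R u) :=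
  eq_neg_of_add_eq_zero_left (ι_add_mul_swap u v)

lemma contractLeft_ι_mul (g : Module.Dual R M) (u : M) (x : ExteriorAlgebra R M) :
    g ⌋ (ι R u * x) = g u • x - ι R u * (g ⌋ x) :=
  CliffordAlgebra.contractLeft_ι_mul (Q := 0) (d := g) u x

lemma contractLeft_ι_mul_ι (g : Module.Dual R M) (u v : M) :
    g ⌋ (ι R u * ι R v) = g u • ι R v - g v • ι R u := by
  rw [contractLeft_ι_mul, CliffordAlgebra.contractLeft_ι, ← Algebra.commutes,
    ← Algebra.smul_def]

lemma contractLeft_ι_mul_ι_mul_ι (g : Module.Dual R M) (u v w : M) :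
    g ⌋ (ι R u * ι R v * ι R w) =
      g u • (ι R v * ι R w) - g v • (ι R u * ι R w) + g w • (ι R u * ι R v) := by
  rw [mul_assoc, contractLeft_ι_mul, contractLeft_ι_mul_ι, mul_sub, mul_smul_comm,
    mul_smul_comm]
  abel

lemma smul_eq_zero_of_ι_mul_eq_zero {g : Module.Dual R M} {α : M} {x : ExteriorAlgebra R M}
    (hαx : ι R α * x = 0) (hgx : g ⌋ x = 0) : g α • x = 0 := by
  simpa [hαx, hgx] using (contractLeft_ι_mul g α x).symm

lemma eq_ι_mul_contractLeft_of_ι_mul_eq_zero {g : Module.Dual R M} {α : M}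
    {x : ExteriorAlgebra R M} (hαx : ι R α * x = 0) (hgα : g α = 1) : x = ι R α * (g ⌋ x) := by
  simpa [hαx, hgα, sub_eq_zero] using (contractLeft_ι_mul g α x).symm

lemma map_sub_smulRight_apply (g : Module.Dual R M) (e : M) (x : ExteriorAlgebra R M) :
    map (LinearMap.id - g.smulRight e) x = x - ι R e * (g ⌋ x) := by
  induction x using CliffordAlgebra.left_induction with
  | algebraMap r => simp
  | add x y hx hy => rw [map_add, hx, hy, map_add, mul_add]; abel
  | ι_mul x u hx =>
    rw [map_mul, map_apply_ι, hx, contractLeft_ι_mul, LinearMap.sub_apply,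
      LinearMap.smulRight_apply, LinearMap.id_apply, map_sub, map_smul]
    have hue : ι R u * (ι R e * (g ⌋ x)) = -(ι R e * (ι R u * (g ⌋ x))) := by
      rw [← mul_assoc, ι_mul_ι_comm, neg_mul, mul_assoc]
    have hee : ι R e * (ι R e * (g ⌋ x)) = 0 := by rw [← mul_assoc, ι_sq_zero, zero_mul]
    simp only [sub_mul, mul_sub, smul_mul_assoc, mul_smul_comm, hue, hee, smul_zero]
    abel

lemma ιMulti_fin_three (v : Fin 3 → M) :
    ιMulti R 3 v = ι R (v 0) * ι R (v 1) * ι R (v 2) := by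
  rw [ιMulti_apply]
  simp [List.ofFn_succ, mul_assoc]

lemma eqOn_exteriorPower_three {N : Type*} [AddCommGroup N] [Module R N]
    {φ ψ : ExteriorAlgebra R M →ₗ[R] N}
    (h : ∀ u v w : M, φ (ι R u * ι R v * ι R w) = ψ (ι R u * ι R v * ι R w)) :
    Set.EqOn φ ψ (⋀[R]^3 M) := by
  rw [← ιMulti_span_fixedDegree]
  refine LinearMap.eqOn_span' ?_
  rintro _ ⟨v, rfl⟩
  rw [ιMulti_fin_three]
  exact h _ _ _

end ExteriorAlgebra

section Wedge

variable {V : Type*} [AddCommGroup V] [Module ℂ V]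

local infixl:70 " ⌋ " => CliffordAlgebra.contractLeft (Q := (0 : QuadraticForm ℂ V))

lemma ι_mul_ι_mem_wedgeSquare {U : Submodule ℂ V} {u v : V} (hu : u ∈ U) (hv : v ∈ U) :
    ι ℂ u * ι ℂ v ∈ wedgeSquare U :=
  Submodule.subset_span ⟨u, v, hu, hv, rfl⟩

lemma ι_mul_ι_mul_ι_mem_wedgeCube {U : Submodule ℂ V} {u v w : V} (hu : u ∈ U) (hv : v ∈ U)
    (hw : w ∈ U) : ι ℂ u * ι ℂ v * ι ℂ w ∈ wedgeCube U :=
  Submodule.subset_span ⟨u, v, w, hu, hv, hw, rfl⟩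

lemma mem_wedgeCube_top {x : ExteriorAlgebra ℂ V} (hx : x ∈ ⋀[ℂ]^3 V) : x ∈ wedgeCube ⊤ := by
  rw [← ιMulti_span_fixedDegree] at hx
  refine Submodule.span_le.2 ?_ hx
  rintro _ ⟨v, rfl⟩
  rw [ιMulti_fin_three]
  exact ι_mul_ι_mul_ι_mem_wedgeCube trivial trivial trivial

lemma map_mem_wedgeSquare {U U' : Submodule ℂ V} {φ : V →ₗ[ℂ] V} (hφ : ∀ u ∈ U, φ u ∈ U')
    {x : ExteriorAlgebra ℂ V} (hx : x ∈ wedgeSquare U) : map φ x ∈ wedgeSquare U' := by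
  refine (Submodule.span_le (p := (wedgeSquare U').comap (map φ).toLinearMap)).2 ?_ hx
  rintro _ ⟨u, v, hu, hv, rfl⟩
  simpa only [SetLike.mem_coe, Submodule.mem_comap, AlgHom.toLinearMap_apply, map_mul,
    map_apply_ι] using ι_mul_ι_mem_wedgeSquare (hφ u hu) (hφ v hv)

lemma map_mem_wedgeCube {U U' : Submodule ℂ V} {φ : V →ₗ[ℂ] V} (hφ : ∀ u ∈ U, φ u ∈ U')
    {x : ExteriorAlgebra ℂ V} (hx : x ∈ wedgeCube U) : map φ x ∈ wedgeCube U' := by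
  refine (Submodule.span_le (p := (wedgeCube U').comap (map φ).toLinearMap)).2 ?_ hx
  rintro _ ⟨u, v, w, hu, hv, hw, rfl⟩
  simpa only [SetLike.mem_coe, Submodule.mem_comap, AlgHom.toLinearMap_apply, map_mul,
    map_apply_ι] using ι_mul_ι_mul_ι_mem_wedgeCube (hφ u hu) (hφ v hv) (hφ w hw)

lemma contractLeft_mem_wedgeSquare {U : Submodule ℂ V} (g : Module.Dual ℂ V)
    {x : ExteriorAlgebra ℂ V} (hx : x ∈ wedgeCube U) : g ⌋ x ∈ wedgeSquare U := by
  refine (Submodule.span_le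
    (p := (wedgeSquare U).comap (CliffordAlgebra.contractLeft (Q := 0) g))).2 ?_ hx
  rintro _ ⟨u, v, w, hu, hv, hw, rfl⟩
  simp only [SetLike.mem_coe, Submodule.mem_comap, contractLeft_ι_mul_ι_mul_ι]
  exact add_mem (sub_mem (Submodule.smul_mem _ _ (ι_mul_ι_mem_wedgeSquare hv hw))
    (Submodule.smul_mem _ _ (ι_mul_ι_mem_wedgeSquare hu hw)))
    (Submodule.smul_mem _ _ (ι_mul_ι_mem_wedgeSquare hu hv))

lemma contractLeft_eq_zero_of_mem_wedgeCube {U : Submodule ℂ V} {g : Module.Dual ℂ V}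
    (hg : U ≤ LinearMap.ker g) {x : ExteriorAlgebra ℂ V} (hx : x ∈ wedgeCube U) : g ⌋ x = 0 := by
  refine (Submodule.span_le
    (p := LinearMap.ker (CliffordAlgebra.contractLeft (Q := 0) g))).2 ?_ hx
  rintro _ ⟨u, v, w, hu, hv, hw, rfl⟩
  rw [SetLike.mem_coe, LinearMap.mem_ker, contractLeft_ι_mul_ι_mul_ι, LinearMap.mem_ker.1 (hg hu),
    LinearMap.mem_ker.1 (hg hv), LinearMap.mem_ker.1 (hg hw)]
  simp

lemma sub_smul_mem_inf_ker {U : Submodule ℂ V} {g : Module.Dual ℂ V} {e : V} (he : e ∈ U)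
    (hge : g e = 1) {u : V} (hu : u ∈ U) :
    (LinearMap.id - g.smulRight e : V →ₗ[ℂ] V) u ∈ U ⊓ LinearMap.ker g :=
  ⟨sub_mem hu (U.smul_mem _ he), by simp [hge]⟩

lemma mem_wedgeSquare_inf_ker {U : Submodule ℂ V} {g : Module.Dual ℂ V} {e : V}
    (he : e ∈ U) (hge : g e = 1) {x : ExteriorAlgebra ℂ V} (hx : x ∈ wedgeSquare U)
    (hgx : g ⌋ x = 0) : x ∈ wedgeSquare (U ⊓ LinearMap.ker g) := by
  rw [← sub_zero x, ← mul_zero (ι ℂ e), ← hgx, ← map_sub_smulRight_apply]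
  exact map_mem_wedgeSquare (fun u hu => sub_smul_mem_inf_ker he hge hu) hx

lemma mem_wedgeCube_inf_ker {U : Submodule ℂ V} {g : Module.Dual ℂ V} {e : V}
    (he : e ∈ U) (hge : g e = 1) {x : ExteriorAlgebra ℂ V} (hx : x ∈ wedgeCube U)
    (hgx : g ⌋ x = 0) : x ∈ wedgeCube (U ⊓ LinearMap.ker g) := by
  rw [← sub_zero x, ← mul_zero (ι ℂ e), ← hgx, ← map_sub_smulRight_apply]
  exact map_mem_wedgeCube (fun u hu => sub_smul_mem_inf_ker he hge hu) hx

lemma ι_mul_ι_mem_span_of_mem_span_triple {a b c u v : V}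
    (hu : u ∈ Submodule.span ℂ {a, b, c}) (hv : v ∈ Submodule.span ℂ {a, b, c}) :
    ι ℂ u * ι ℂ v ∈ Submodule.span ℂ {ι ℂ b * ι ℂ c, ι ℂ a * ι ℂ c, ι ℂ a * ι ℂ b} := by
  obtain ⟨x₁, x₂, x₃, rfl⟩ := Submodule.mem_span_triple.1 hu
  obtain ⟨y₁, y₂, y₃, rfl⟩ := Submodule.mem_span_triple.1 hv
  refine Submodule.mem_span_triple.2
    ⟨x₂ * y₃ - x₃ * y₂, x₁ * y₃ - x₃ * y₁, x₁ * y₂ - x₂ * y₁, ?_⟩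
  simp only [map_add, map_smul, add_mul, mul_add, smul_mul_assoc, mul_smul_comm, ι_sq_zero,
    smul_zero, add_zero, zero_add, ι_mul_ι_comm b a, ι_mul_ι_comm c a, ι_mul_ι_comm c b]
  module

lemma exists_eq_ι_mul_ι_of_mem_span_triple {a b c : V} {x : ExteriorAlgebra ℂ V}
    (hx : x ∈ Submodule.span ℂ {ι ℂ b * ι ℂ c, ι ℂ a * ι ℂ c, ι ℂ a * ι ℂ b}) :
    ∃ u v : V, x = ι ℂ u * ι ℂ v := by
  obtain ⟨p, q, r, rfl⟩ := Submodule.mem_span_triple.1 hx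
  by_cases hr : r = 0
  · refine ⟨p • b + q • a, c, ?_⟩
    simp only [hr, zero_smul, add_zero, map_add, map_smul, add_mul, smul_mul_assoc]
  · refine ⟨r • a - p • c, b + (q / r) • c, ?_⟩
    simp only [map_add, map_sub, map_smul, sub_mul, mul_add, smul_mul_assoc, mul_smul_comm,
      ι_sq_zero, smul_zero, ι_mul_ι_comm c b, smul_neg]
    match_scalars <;> field_simp

variable [FiniteDimensional ℂ V]

lemma exists_eq_ι_mul_ι_of_finrank_le_three {C : Submodule ℂ V} (hC : Module.finrank ℂ C ≤ 3)
    {x : ExteriorAlgebra ℂ V} (hx : x ∈ wedgeSquare C) : ∃ u v : V, x = ι ℂ u * ι ℂ v := by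
  obtain ⟨a, b, c, hC⟩ := C.exists_le_span_triple hC
  refine exists_eq_ι_mul_ι_of_mem_span_triple (a := a) (b := b) (c := c)
    (Submodule.span_le.2 ?_ hx)
  rintro _ ⟨u, v, hu, hv, rfl⟩
  exact ι_mul_ι_mem_span_of_mem_span_triple (hC hu) (hC hv)

lemma exists_eq_ι_mul_ι_mul_ι_of_finrank_le_four {B : Submodule ℂ V}
    (hB : Module.finrank ℂ B ≤ 4) {x : ExteriorAlgebra ℂ V} (hx : x ∈ wedgeCube B) {α : V}
    (hα : α ≠ 0) (hαB : α ∈ B) (hαx : ι ℂ α * x = 0) :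
    ∃ u v w : V, x = ι ℂ u * ι ℂ v * ι ℂ w := by
  obtain ⟨g, hg⟩ := Module.Projective.exists_dual_eq_one ℂ hα
  have hσ : g ⌋ x ∈ wedgeSquare (B ⊓ LinearMap.ker g) :=
    mem_wedgeSquare_inf_ker hαB hg (contractLeft_mem_wedgeSquare g hx)
      (CliffordAlgebra.contractLeft_contractLeft g x)
  have hdim := B.finrank_inf_ker_lt hαB (g := g) (by simp [hg])
  obtain ⟨u, v, huv⟩ := exists_eq_ι_mul_ι_of_finrank_le_three (by omega) hσ
  refine ⟨α, u, v, ?_⟩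
  rw [mul_assoc, ← huv]
  exact eq_ι_mul_contractLeft_of_ι_mul_eq_zero hαx hg

lemma le_of_mem_wedgeCube {A W : Submodule ℂ V} (hA : Module.finrank ℂ A ≤ 5)
    {x : ExteriorAlgebra ℂ V} (hxA : x ∈ wedgeCube A) (hxW : x ∈ wedgeCube W)
    (hx : ¬ ∃ u v w : V, x = ι ℂ u * ι ℂ v * ι ℂ w) {α : V} (hα : α ≠ 0) (hαA : α ∈ A)
    (hαx : ι ℂ α * x = 0) : A ≤ W := by
  intro v hvA
  by_contra hvW
  obtain ⟨h, hv, hW⟩ := Submodule.exists_dual_eq_one_and_le_ker hvW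
  have hx0 : x ≠ 0 := fun h0 => hx ⟨0, 0, 0, by simp [h0]⟩
  have hhx : h ⌋ x = 0 := contractLeft_eq_zero_of_mem_wedgeCube hW hxW
  have hhα : h α = 0 := by simpa [hx0] using smul_eq_zero_of_ι_mul_eq_zero hαx hhx
  have hdim := A.finrank_inf_ker_lt hvA (g := h) (by simp [hv])
  exact hx (exists_eq_ι_mul_ι_mul_ι_of_finrank_le_four (by omega)
    (mem_wedgeCube_inf_ker hvA hv hxA hhx) hα ⟨hαA, hhα⟩ hαx)

end Wedge

/-- for `ω ∈ O₅` with kernel line spanned by `α` and associated hyperplane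
`A_ω = ker f` (where `f` spans the kernel of the contraction by `ω`): (i) `α ∈ A_ω`;
(ii) `A_ω` is the smallest subspace `W` with `ω` in the image of `⋀³W`; (iii) `ω = α∧σ`
for some non-decomposable `σ ∈ ⋀²A_ω`. -/
theorem stmt6 {V : Type*} [AddCommGroup V] [Module ℂ V] [FiniteDimensional ℂ V]
    (hV : Module.finrank ℂ V = 6)
    (ω : ExteriorAlgebra ℂ V) (hω : InO5 ω)
    (α : V) (hα : α ≠ 0)
    (hker : ∀ v : V, ι ℂ v * ω = 0 ↔ v ∈ Submodule.span ℂ {α})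
    (K : Module.Dual ℂ V →ₗ[ℂ] ExteriorAlgebra ℂ V →ₗ[ℂ] ExteriorAlgebra ℂ V)
    (hK : ∀ (f : Module.Dual ℂ V) (u v w : V),
      K f (ι ℂ u * ι ℂ v * ι ℂ w) =
        f u • (ι ℂ v * ι ℂ w) - f v • (ι ℂ u * ι ℂ w) + f w • (ι ℂ u * ι ℂ v))
    (f : Module.Dual ℂ V) (hf : f ≠ 0) (hfω : K f ω = 0) :
    α ∈ LinearMap.ker f ∧
    (ω ∈ wedgeCube (LinearMap.ker f) ∧
      ∀ W : Submodule ℂ V, ω ∈ wedgeCube W → LinearMap.ker f ≤ W) ∧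
    (∃ σ ∈ wedgeSquare (LinearMap.ker f),
      (¬ ∃ u v : V, σ = ι ℂ u * ι ℂ v) ∧ ω = ι ℂ α * σ) := by
  obtain ⟨hω3, hωnd, -⟩ := hω
  have hω0 : ω ≠ 0 := fun h0 => hωnd ⟨0, 0, 0, by simp [h0]⟩
  have hαω : ι ℂ α * ω = 0 := (hker α).2 (Submodule.mem_span_singleton_self α)
  have hcontract : CliffordAlgebra.contractLeft (Q := 0) f ω = 0 := by
    rw [← hfω]
    refine (eqOn_exteriorPower_three (fun u v w => ?_) hω3).symm
    rw [hK, contractLeft_ι_mul_ι_mul_ι]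
  obtain ⟨e, he⟩ := LinearMap.surjective hf 1
  have hωA : ω ∈ wedgeCube (LinearMap.ker f) := by
    simpa using mem_wedgeCube_inf_ker Submodule.mem_top he (mem_wedgeCube_top hω3) hcontract
  have hfα : f α = 0 := by simpa [hω0] using smul_eq_zero_of_ι_mul_eq_zero hαω hcontract
  have hA : Module.finrank ℂ (LinearMap.ker f) + 1 = 6 :=
    hV ▸ Module.Dual.finrank_ker_add_one_of_ne_zero hf
  obtain ⟨g, hg⟩ := Module.Projective.exists_dual_eq_one ℂ hα
  have hωσ := eq_ι_mul_contractLeft_of_ι_mul_eq_zero hαω hg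
  refine ⟨hfα, ⟨hωA, fun W hW => le_of_mem_wedgeCube (by omega) hωA hW hωnd hα hfα hαω⟩,
    _, contractLeft_mem_wedgeSquare g hωA, ?_, hωσ⟩
  rintro ⟨u, v, huv⟩
  exact hωnd ⟨α, u, v, by rw [hωσ, huv, mul_assoc]⟩
end

section
/- Let V be a 6-dimensional complex vector space and ω ∈ ⋀³V nonzero. If the kernel of the map ∧ω : V → ⋀⁴V, v ↦ v∧ω, has dimension at least 2, then ω is decomposable; moreover, ω is decomposable if and only if this kernel has dimension exactly 3 (namely, the kernel then equals the 3-dimensional subspace whose Plücker vector is ω). In particular, for nonzero ω the kernel of ∧ω has dimension 0, 1, or 3. -/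
/-!
If `v ∧ x = 0` and `f` is a linear form with `f v = 1`, contracting with `f` gives
`x = v ∧ (f ⌋ x)`. Dividing a trivector `ω` in this way by two independent vectors of its kernel
leaves a vector as last factor, so `ω` is decomposable. Conversely, for independent `a, b, c` the
product `v ∧ a ∧ b ∧ c` vanishes exactly when `v ∈ span {a, b, c}`, since a wedge of independent
vectors pairs to `det 1 = 1` with a wedge of a dual family. Hence decomposable `ω ≠ 0` have a
3-dimensional kernel, and a kernel of dimension `2` cannot occur.
-/

open ExteriorAlgebra

noncomputable def wedgeKer {V : Type*} [AddCommGroup V] [Module ℂ V]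
    (ω : ExteriorAlgebra ℂ V) : Submodule ℂ V :=
  LinearMap.ker ((LinearMap.mulRight ℂ ω).comp (ι ℂ))

theorem LinearIndependent.exists_pairwise_dual_eq_zero_one {K V ι : Type*} [Field K]
    [AddCommGroup V] [Module K V] {v : ι → V} (hv : LinearIndependent K v) :
    ∃ f : ι → Module.Dual K V, Pairwise (fun i j ↦ f i (v j) = 0) ∧ ∀ i, f i (v i) = 1 := by
  classical
  choose f hf using fun i ↦ LinearMap.exists_extend ((Module.Basis.span hv).coord i)
  have hfv (i j : ι) : f i (v j) = (Module.Basis.span hv).coord i (Module.Basis.span hv j) := by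
    rw [← hf i, LinearMap.comp_apply, Submodule.subtype_apply, Module.Basis.span_apply]
  exact ⟨f, fun i j hij ↦ by simp [hfv, hij], fun i ↦ by simp [hfv]⟩

namespace ExteriorAlgebra

section CommRing

variable {R M : Type*} [CommRing R] [AddCommGroup M] [Module R M]

theorem ιMulti_three (a b c : M) : ιMulti R 3 ![a, b, c] = ι R a * ι R b * ι R c := by
  simp [ιMulti_apply, mul_assoc]

theorem contractLeft_eq_zero_of_mem_exteriorPower_zero (f : Module.Dual R M)
    {x : ExteriorAlgebra R M} (hx : x ∈ ⋀[R]^0 M) : CliffordAlgebra.contractLeft f x = 0 := by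
  rw [exteriorPower, pow_zero, Submodule.mem_one] at hx
  obtain ⟨r, rfl⟩ := hx
  exact CliffordAlgebra.contractLeft_algebraMap _ f r

theorem contractLeft_mem_exteriorPower (f : Module.Dual R M) {n : ℕ} {x : ExteriorAlgebra R M}
    (hx : x ∈ ⋀[R]^(n + 1) M) : CliffordAlgebra.contractLeft f x ∈ ⋀[R]^n M := by
  rw [exteriorPower, pow_succ'] at hx
  induction hx using Submodule.mul_induction_on' with
  | mem_mul_mem a ha y hy =>
    obtain ⟨a, rfl⟩ := ha
    rw [CliffordAlgebra.contractLeft_ι_mul]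
    refine Submodule.sub_mem _ (Submodule.smul_mem _ _ hy) ?_
    cases n with
    | zero => simp [contractLeft_eq_zero_of_mem_exteriorPower_zero f hy]
    | succ n =>
      rw [exteriorPower, pow_succ']
      exact Submodule.mul_mem_mul (LinearMap.mem_range_self _ a)
        (contractLeft_mem_exteriorPower f hy)
  | add x _ y _ hx hy => rw [map_add]; exact Submodule.add_mem _ hx hy

theorem eq_ι_mul_contractLeft_of_ι_mul_eq_zero_s19 {v : M} {f : Module.Dual R M} (hf : f v = 1)
    {x : ExteriorAlgebra R M} (hx : ι R v * x = 0) :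
    x = ι R v * CliffordAlgebra.contractLeft f x := by
  have := congrArg (CliffordAlgebra.contractLeft f) hx
  rwa [map_zero, CliffordAlgebra.contractLeft_ι_mul, hf, one_smul, sub_eq_zero] at this

theorem exists_eq_ι_mul_ι_mul_ι_of_ι_mul_eq_zero {x : ExteriorAlgebra R M} (hx : x ∈ ⋀[R]^3 M)
    {v₁ v₂ : M} {f₁ f₂ : Module.Dual R M} (h₁₁ : f₁ v₁ = 1) (h₂₁ : f₂ v₁ = 0) (h₂₂ : f₂ v₂ = 1)
    (hv₁ : ι R v₁ * x = 0) (hv₂ : ι R v₂ * x = 0) : ∃ c, x = ι R v₂ * ι R v₁ * ι R c := by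
  set η := CliffordAlgebra.contractLeft f₁ x
  have hxη : x = ι R v₁ * η := eq_ι_mul_contractLeft_of_ι_mul_eq_zero_s19 h₁₁ hv₁
  obtain ⟨c, hc⟩ : CliffordAlgebra.contractLeft f₂ η ∈ LinearMap.range (ι R) := by
    simpa [exteriorPower] using
      contractLeft_mem_exteriorPower f₂ (contractLeft_mem_exteriorPower (n := 2) f₁ hx)
  refine ⟨-c, ?_⟩
  rw [eq_ι_mul_contractLeft_of_ι_mul_eq_zero_s19 h₂₂ hv₂, hxη, CliffordAlgebra.contractLeft_ι_mul, h₂₁, zero_smul, zero_sub, ← hc, map_neg]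
  simp [mul_assoc]

end CommRing

section Field

variable {K V : Type*} [Field K] [AddCommGroup V] [Module K V]

theorem exists_eq_ι_mul_ι_mul_ι_of_linearIndependent {x : ExteriorAlgebra K V}
    (hx : x ∈ ⋀[K]^3 V) {v : Fin 2 → V} (hv : LinearIndependent K v)
    (hvx : ∀ i, ι K (v i) * x = 0) : ∃ a b c : V, x = ι K a * ι K b * ι K c := by
  obtain ⟨f, hf₀, hf₁⟩ := hv.exists_pairwise_dual_eq_zero_one
  obtain ⟨c, hc⟩ := exists_eq_ι_mul_ι_mul_ι_of_ι_mul_eq_zero hx (hf₁ 0) (hf₀ (by decide))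
    (hf₁ 1) (hvx 0) (hvx 1)
  exact ⟨_, _, c, hc⟩

theorem ιMulti_ne_zero_of_linearIndependent {n : ℕ} {v : Fin n → V}
    (hv : LinearIndependent K v) : ιMulti K n v ≠ 0 := by
  obtain ⟨f, hf₀, hf₁⟩ := hv.exists_pairwise_dual_eq_zero_one
  have hdet : exteriorPower.pairingDual K V n (exteriorPower.ιMulti K n f)
      (exteriorPower.ιMulti K n v) = 1 := by
    rw [exteriorPower.pairingDual_ιMulti_ιMulti, ← Matrix.det_one (n := Fin n) (R := K)]
    congr 1
    ext i j
    by_cases h : i = j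
    · simp [h, hf₁, Matrix.one_apply]
    · simp [Matrix.one_apply_ne h, hf₀ (Ne.symm h)]
  intro h
  have : exteriorPower.ιMulti K n v = 0 := Subtype.ext h
  simp [this] at hdet

theorem linearIndependent_of_ιMulti_ne_zero {n : ℕ} {v : Fin n → V} (h : ιMulti K n v ≠ 0) :
    LinearIndependent K v :=
  by_contra fun hdep ↦ h ((ιMulti K n).map_linearDependent _ hdep)

theorem ι_mul_ιMulti_eq_zero_iff {n : ℕ} {u : Fin n → V} (hu : LinearIndependent K u) (v : V) :
    ι K v * ιMulti K n u = 0 ↔ v ∈ Submodule.span K (Set.range u) := by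
  have hcons : ι K v * ιMulti K n u = ιMulti K (n + 1) (Fin.cons v u) := by
    simp [Matrix.vecTail]
  rw [hcons]
  constructor
  · intro h
    by_contra hv
    exact ιMulti_ne_zero_of_linearIndependent (linearIndependent_finCons.2 ⟨hu, hv⟩) h
  · intro hv
    exact (ιMulti K _).map_linearDependent _ fun h ↦ (linearIndependent_finCons.1 h).2 hv

end Field

end ExteriorAlgebra

section WedgeKer

variable {V : Type*} [AddCommGroup V] [Module ℂ V]

theorem mem_wedgeKer_iff {ω : ExteriorAlgebra ℂ V} {v : V} : v ∈ wedgeKer ω ↔ ι ℂ v * ω = 0 :=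
  Iff.rfl

theorem wedgeKer_ιMulti {n : ℕ} {u : Fin n → V} (hu : LinearIndependent ℂ u) :
    wedgeKer (ιMulti ℂ n u) = Submodule.span ℂ (Set.range u) :=
  Submodule.ext fun v ↦ mem_wedgeKer_iff.trans (ι_mul_ιMulti_eq_zero_iff hu v)

theorem finrank_wedgeKer_ιMulti {n : ℕ} {u : Fin n → V} (hu : LinearIndependent ℂ u) :
    Module.finrank ℂ (wedgeKer (ιMulti ℂ n u)) = n := by
  rw [wedgeKer_ιMulti hu, finrank_span_eq_card hu, Fintype.card_fin]

theorem wedgeKer_eq_span_of_eq_ι_mul_ι_mul_ι {ω : ExteriorAlgebra ℂ V} (hω : ω ≠ 0) {a b c : V}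
    (h : ω = ι ℂ a * ι ℂ b * ι ℂ c) : wedgeKer ω = Submodule.span ℂ {a, b, c} := by
  rw [← ιMulti_three] at h
  subst h
  rw [wedgeKer_ιMulti (linearIndependent_of_ιMulti_ne_zero hω)]
  simp only [Matrix.range_cons, Matrix.range_empty, Set.union_empty, Set.singleton_union]

theorem finrank_wedgeKer_of_eq_ι_mul_ι_mul_ι {ω : ExteriorAlgebra ℂ V} (hω : ω ≠ 0) {a b c : V}
    (h : ω = ι ℂ a * ι ℂ b * ι ℂ c) : Module.finrank ℂ (wedgeKer ω) = 3 := by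
  rw [← ιMulti_three] at h
  subst h
  exact finrank_wedgeKer_ιMulti (linearIndependent_of_ιMulti_ne_zero hω)

theorem exists_eq_ι_mul_ι_mul_ι_of_two_le_finrank_wedgeKer {ω : ExteriorAlgebra ℂ V}
    (hω3 : ω ∈ ⋀[ℂ]^3 V) (h : 2 ≤ Module.finrank ℂ (wedgeKer ω)) :
    ∃ a b c : V, ω = ι ℂ a * ι ℂ b * ι ℂ c := by
  obtain ⟨u, hu⟩ := exists_linearIndependent_of_le_finrank h
  exact exists_eq_ι_mul_ι_mul_ι_of_linearIndependent hω3 (hu.map' _ (Submodule.ker_subtype _))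
    fun i ↦ (u i).2

end WedgeKer

theorem stmt19_general {V : Type*} [AddCommGroup V] [Module ℂ V]
    (ω : ExteriorAlgebra ℂ V) (hω3 : ω ∈ ⋀[ℂ]^3 V) (hω : ω ≠ 0) :
    (2 ≤ Module.finrank ℂ (wedgeKer ω) →
      ∃ a b c : V, ω = ι ℂ a * ι ℂ b * ι ℂ c) ∧
    ((∃ a b c : V, ω = ι ℂ a * ι ℂ b * ι ℂ c) ↔
      Module.finrank ℂ (wedgeKer ω) = 3) ∧
    (∀ a b c : V, ω = ι ℂ a * ι ℂ b * ι ℂ c →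
      wedgeKer ω = Submodule.span ℂ {a, b, c}) ∧
    (Module.finrank ℂ (wedgeKer ω) = 0 ∨ Module.finrank ℂ (wedgeKer ω) = 1 ∨
      Module.finrank ℂ (wedgeKer ω) = 3) := by
  have decomposable := exists_eq_ι_mul_ι_mul_ι_of_two_le_finrank_wedgeKer hω3
  have finrank_three : (∃ a b c : V, ω = ι ℂ a * ι ℂ b * ι ℂ c) →
      Module.finrank ℂ (wedgeKer ω) = 3 :=
    fun ⟨_, _, _, h⟩ ↦ finrank_wedgeKer_of_eq_ι_mul_ι_mul_ι hω h
  refine ⟨decomposable, ⟨finrank_three, fun h ↦ decomposable (by omega)⟩,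
    fun _ _ _ ↦ wedgeKer_eq_span_of_eq_ι_mul_ι_mul_ι hω, ?_⟩
  by_cases h : 2 ≤ Module.finrank ℂ (wedgeKer ω)
  · exact Or.inr (Or.inr (finrank_three (decomposable h)))
  · omega

/-- for a 6-dimensional complex `V` and nonzero `ω ∈ ⋀³V`: if the kernel of
`∧ω` has dimension `≥ 2` then `ω` is decomposable; `ω` is decomposable iff this kernel has
dimension exactly 3, in which case the kernel is the 3-dimensional subspace whose Plücker
vector is `ω`; in particular the kernel has dimension 0, 1 or 3. -/
theorem stmt19 {V : Type*} [AddCommGroup V] [Module ℂ V] [FiniteDimensional ℂ V]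
    (hV : Module.finrank ℂ V = 6)
    (ω : ExteriorAlgebra ℂ V) (hω3 : ω ∈ ⋀[ℂ]^3 V) (hω : ω ≠ 0) :
    (2 ≤ Module.finrank ℂ (wedgeKer ω) →
      ∃ a b c : V, ω = ι ℂ a * ι ℂ b * ι ℂ c) ∧
    ((∃ a b c : V, ω = ι ℂ a * ι ℂ b * ι ℂ c) ↔
      Module.finrank ℂ (wedgeKer ω) = 3) ∧
    (∀ a b c : V, ω = ι ℂ a * ι ℂ b * ι ℂ c →
      wedgeKer ω = Submodule.span ℂ {a, b, c}) ∧
    (Module.finrank ℂ (wedgeKer ω) = 0 ∨ Module.finrank ℂ (wedgeKer ω) = 1 ∨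
      Module.finrank ℂ (wedgeKer ω) = 3) :=
  stmt19_general ω hω3 hω
end
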